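/- arXiv:1807.04530 — 4 statements merged into one kernel-verified Lean document; each statement's English description precedes it below -/
import Mathlib

section
/- Let A ∈ Sym(n,ℝ) have pairwise distinct eigenvalues λ_1, …, λ_n. Then the distance from A to the cone C(Δ) of symmetric matrices with a repeated eigenvalue satisfies min_{B ∈ C(Δ)} ‖A − B‖ = min_{1 ≤ i < j ≤ n} |λ_i − λ_j| / √2, and this infimum is attained. -/
open MeasureTheory Matrix Polynomial
open scoped Classical ENNReal

noncomputable section

/-- Frobenius norm `‖A‖ = √tr(AᵀA)` on matrices. -/
def frobNorm {n : ℕ} (A : Matrix (Fin n) (Fin n) ℝ) : ℝ :=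
  Real.sqrt (Matrix.trace (Aᵀ * A))

/-- The cone `C(Δ)` over the discriminant: real symmetric matrices having at least
two equal eigenvalues (a root of the characteristic polynomial of multiplicity ≥ 2). -/
def coneDelta (n : ℕ) : Set (Matrix (Fin n) (Fin n) ℝ) :=
  {B | B.IsSymm ∧ ∃ μ : ℝ, 2 ≤ B.charpoly.rootMultiplicity μ}

/-! Merging the two closest eigenvalues `λᵢ, λⱼ` into their mean in the spectral decomposition
of `A` gives a matrix of `C(Δ)` at distance `|λᵢ - λⱼ| / √2`. Conversely, a matrix `B ∈ C(Δ)` has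
orthonormal eigenvectors `u, v` for one eigenvalue `μ`, so with `(eₖ)` an eigenbasis of `A`,
`‖A - B‖² ≥ ‖(A - μ) u‖² + ‖(A - μ) v‖² = ∑ₖ (λₖ - μ)² cₖ`, where `cₖ = ⟪eₖ, u⟫² + ⟪eₖ, v⟫²` lies
in `[0, 1]` by Bessel and `∑ₖ cₖ = 2` by Parseval. Such a weighted sum is at least
`minₖ≠ₗ ((λₖ - μ)² + (λₗ - μ)²) ≥ minₖ≠ₗ (λₖ - λₗ)² / 2`. -/

open scoped RealInnerProductSpace
open Finset

theorem le_sum_mul_of_le_add_of_sum_eq_two {ι : Type*} [Fintype ι] {d c : ι → ℝ} {G : ℝ}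
    (hd : ∀ k l, k ≠ l → G ≤ d k + d l) (hc₀ : ∀ k, 0 ≤ c k) (hc₁ : ∀ k, c k ≤ 1)
    (hc : ∑ k, c k = 2) : G ≤ ∑ k, d k * c k := by
  by_cases hsmall : ∃ k₀, d k₀ < G / 2
  · obtain ⟨k₀, hk₀⟩ := hsmall
    rw [← add_sum_erase _ _ (mem_univ k₀)] at hc ⊢
    have hrest : (G - d k₀) * (2 - c k₀) ≤ ∑ k ∈ univ.erase k₀, d k * c k := by
      rw [show 2 - c k₀ = ∑ k ∈ univ.erase k₀, c k by linarith, mul_sum]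
      exact sum_le_sum fun k hk => mul_le_mul_of_nonneg_right
        (by linarith [hd k k₀ (ne_of_mem_erase hk)]) (hc₀ k)
    nlinarith [mul_nonneg (sub_nonneg.2 (hc₁ k₀)) (by linarith : 0 ≤ G - 2 * d k₀)]
  · push Not at hsmall
    calc G = ∑ k, G / 2 * c k := by rw [← mul_sum, hc]; ring
      _ ≤ _ := sum_le_sum fun k _ => mul_le_mul_of_nonneg_right (hsmall k) (hc₀ k)

section InnerProductSpace

variable {E ι κ : Type*} [NormedAddCommGroup E] [InnerProductSpace ℝ E] [Fintype ι]

theorem Orthonormal.sum_sq_inner_le_one {w : κ → E} (hw : Orthonormal ℝ w) (s : Finset κ)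
    {x : E} (hx : ‖x‖ = 1) : ∑ j ∈ s, ⟪x, w j⟫ ^ 2 ≤ 1 := by
  simpa [hx, real_inner_comm] using hw.sum_inner_products_le x (s := s)

theorem OrthonormalBasis.sum_sum_sq_inner_eq_card (b : OrthonormalBasis ι ℝ E) {w : κ → E}
    (hw : Orthonormal ℝ w) (s : Finset κ) : ∑ k, ∑ j ∈ s, ⟪b k, w j⟫ ^ 2 = #s := by
  rw [sum_comm]
  simp [b.sum_sq_inner_right, hw.1]

variable {T : E →ₗ[ℝ] E} (b : OrthonormalBasis ι ℝ E) {eig : ι → ℝ}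

theorem LinearMap.IsSymmetric.norm_sub_smul_sq_eq_sum (hT : T.IsSymmetric)
    (hb : ∀ k, T (b k) = eig k • b k) (μ : ℝ) (x : E) :
    ‖T x - μ • x‖ ^ 2 = ∑ k, (eig k - μ) ^ 2 * ⟪b k, x⟫ ^ 2 := by
  rw [← b.sum_sq_inner_right]
  refine sum_congr rfl fun k _ => ?_
  rw [inner_sub_right, inner_smul_right, ← hT, hb, inner_smul_left]
  simp only [conj_trivial]
  ring

theorem LinearMap.IsSymmetric.le_sum_norm_sub_smul_sq (hT : T.IsSymmetric)
    (hb : ∀ k, T (b k) = eig k • b k) {G μ : ℝ}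
    (hgap : ∀ k l, k ≠ l → G ≤ (eig k - μ) ^ 2 + (eig l - μ) ^ 2) {w : κ → E}
    (hw : Orthonormal ℝ w) {s : Finset κ} (hs : #s = 2) :
    G ≤ ∑ j ∈ s, ‖T (w j) - μ • w j‖ ^ 2 := by
  simp_rw [hT.norm_sub_smul_sq_eq_sum b hb μ]
  rw [sum_comm]
  simp_rw [← mul_sum]
  refine le_sum_mul_of_le_add_of_sum_eq_two hgap (fun k => sum_nonneg fun j _ => sq_nonneg _)
    (fun k => hw.sum_sq_inner_le_one s (b.orthonormal.1 k)) ?_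
  rw [b.sum_sum_sq_inner_eq_card hw, hs]
  norm_num

end InnerProductSpace

theorem Polynomial.two_le_rootMultiplicity_prod_X_sub_C_iff {ι R : Type*} [Fintype ι]
    [CommRing R] [IsDomain R] (d : ι → R) (μ : R) :
    2 ≤ (∏ k, (X - C (d k))).rootMultiplicity μ ↔ ∃ k l, k ≠ l ∧ d k = μ ∧ d l = μ := by
  have hprod : ∏ k, (X - C (d k)) = ((univ.val.map d).map fun a => X - C a).prod := by
    rw [prod_eq_multiset_prod, Multiset.map_map]; rfl
  rw [← count_roots, hprod, roots_multiset_prod_X_sub_C, Multiset.count_map, ← filter_val,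
    card_val]
  change 1 < _ ↔ _
  rw [one_lt_card_iff]
  simp only [mem_filter, mem_univ, true_and, eq_comm (a := μ)]
  exact ⟨fun ⟨k, l, hk, hl, hkl⟩ => ⟨k, l, hkl, hk, hl⟩,
    fun ⟨k, l, hkl, hk, hl⟩ => ⟨k, l, hk, hl, hkl⟩⟩

namespace Matrix

theorem frobNorm_sq {n : ℕ} (M : Matrix (Fin n) (Fin n) ℝ) :
    frobNorm M ^ 2 = ∑ i, ∑ j, M i j ^ 2 := by
  have htr : trace (Mᵀ * M) = ∑ i, ∑ j, M i j ^ 2 := by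
    rw [sum_comm]; simp [trace, mul_apply, sq]
  rw [frobNorm, htr, Real.sq_sqrt (by positivity)]

theorem sum_norm_toEuclideanLin_sq_le_frobNorm_sq {n : ℕ} (M : Matrix (Fin n) (Fin n) ℝ)
    {κ : Type*} {w : κ → EuclideanSpace ℝ (Fin n)} (hw : Orthonormal ℝ w) (s : Finset κ) :
    ∑ j ∈ s, ‖toEuclideanLin M (w j)‖ ^ 2 ≤ frobNorm M ^ 2 := by
  have hrow : ∀ x, ‖toEuclideanLin M x‖ ^ 2 = ∑ i, ⟪WithLp.toLp 2 (M i), x⟫ ^ 2 := by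
    intro x
    simp [EuclideanSpace.real_norm_sq_eq, mulVec, dotProduct, PiLp.inner_apply, mul_comm]
  simp_rw [hrow, frobNorm_sq]
  rw [sum_comm]
  refine sum_le_sum fun i _ => ?_
  have := hw.sum_inner_products_le (WithLp.toLp 2 (M i)) (s := s)
  simpa [EuclideanSpace.real_norm_sq_eq, real_inner_comm] using this

theorem frobNorm_diagonal {n : ℕ} (v : Fin n → ℝ) :
    frobNorm (diagonal v) = √(∑ i, v i ^ 2) := by
  simp [frobNorm, diagonal_mul_diagonal, sq]

theorem frobNorm_conjStarAlgAut {n : ℕ} (u : unitaryGroup (Fin n) ℝ)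
    (M : Matrix (Fin n) (Fin n) ℝ) :
    frobNorm (Unitary.conjStarAlgAut ℝ _ u M) = frobNorm M := by
  have hu : (u : Matrix (Fin n) (Fin n) ℝ)ᵀ * u = 1 := by
    simpa [star_eq_conjTranspose] using Unitary.coe_star_mul_self u
  set U : Matrix (Fin n) (Fin n) ℝ := ↑u
  simp only [frobNorm, Unitary.conjStarAlgAut_apply, star_eq_conjTranspose,
    conjTranspose_eq_transpose_of_trivial, transpose_mul, transpose_transpose]
  congr 1
  calc trace (U * (Mᵀ * Uᵀ) * (U * M * Uᵀ)) = trace (Uᵀ * U * (Mᵀ * (Uᵀ * U) * M)) := by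
        rw [← mul_assoc, trace_mul_comm]; simp only [mul_assoc]
    _ = trace (Mᵀ * M) := by rw [hu, one_mul, mul_one]

theorem charpoly_conjStarAlgAut {n R : Type*} [Fintype n] [DecidableEq n] [CommRing R]
    [StarRing R] (u : unitaryGroup n R) (M : Matrix n n R) :
    (Unitary.conjStarAlgAut R _ u M).charpoly = M.charpoly := by
  rw [Unitary.conjStarAlgAut_apply, charpoly_mul_comm, ← mul_assoc, Unitary.coe_star_mul_self,
    one_mul]

namespace IsHermitian

variable {n : ℕ} {A : Matrix (Fin n) (Fin n) ℝ} (hA : A.IsHermitian)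

theorem toEuclideanLin_eigenvectorBasis (k : Fin n) :
    toEuclideanLin A (hA.eigenvectorBasis k) = hA.eigenvalues k • hA.eigenvectorBasis k := by
  ext i
  simpa using congrFun (hA.mulVec_eigenvectorBasis k) i

theorem exists_mem_coneDelta_frobNorm_sub_eq {i j : Fin n} (hij : i ≠ j) :
    ∃ B ∈ coneDelta n,
      frobNorm (A - B) = |hA.eigenvalues i - hA.eigenvalues j| / √2 := by
  set U := hA.eigenvectorUnitary
  set m := (hA.eigenvalues i + hA.eigenvalues j) / 2
  set d := Function.update (Function.update hA.eigenvalues i m) j m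
  have hA_eq : A = Unitary.conjStarAlgAut ℝ _ U (diagonal hA.eigenvalues) := by
    simpa using hA.spectral_theorem
  have hdi : d i = m := by simp [d, hij]
  have hdj : d j = m := by simp [d]
  refine ⟨Unitary.conjStarAlgAut ℝ _ U (diagonal d), ⟨?_, m, ?_⟩, ?_⟩
  · exact ((isHermitian_diagonal d).isSelfAdjoint.map (Unitary.conjStarAlgAut ℝ _ U) :)
  · rw [charpoly_conjStarAlgAut, charpoly_diagonal, two_le_rootMultiplicity_prod_X_sub_C_iff]
    exact ⟨i, j, hij, hdi, hdj⟩
  · conv_lhs => rw [hA_eq]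
    rw [← map_sub, diagonal_sub, frobNorm_conjStarAlgAut, frobNorm_diagonal,
      Fintype.sum_eq_add i j hij fun k hk => ?_]
    · rw [hdi, hdj, show (hA.eigenvalues i - m) ^ 2 + (hA.eigenvalues j - m) ^ 2
          = (hA.eigenvalues i - hA.eigenvalues j) ^ 2 / 2 by ring,
        Real.sqrt_div (sq_nonneg _), Real.sqrt_sq_eq_abs]
    · simp [d, hk.1, hk.2]

theorem le_frobNorm_sub_of_mem_coneDelta {g : ℝ}
    (hg : ∀ k l, k ≠ l → g ≤ |hA.eigenvalues k - hA.eigenvalues l| / √2)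
    {B : Matrix (Fin n) (Fin n) ℝ} (hB : B ∈ coneDelta n) : g ≤ frobNorm (A - B) := by
  obtain ⟨hBsymm, μ, hμ⟩ := hB
  have hB : B.IsHermitian := hBsymm
  rw [hB.charpoly_eq, two_le_rootMultiplicity_prod_X_sub_C_iff] at hμ
  obtain ⟨k, l, hkl, hk, hl⟩ := hμ
  rcases lt_or_ge g 0 with hg₀ | hg₀
  · exact hg₀.le.trans (Real.sqrt_nonneg _)
  have hgap : ∀ k l, k ≠ l →
      g ^ 2 ≤ (hA.eigenvalues k - μ) ^ 2 + (hA.eigenvalues l - μ) ^ 2 := by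
    intro k l hkl
    have h := pow_le_pow_left₀ hg₀ (hg k l hkl) 2
    rw [div_pow, sq_abs, Real.sq_sqrt zero_le_two] at h
    nlinarith [sq_nonneg (hA.eigenvalues k + hA.eigenvalues l - 2 * μ)]
  set b := hB.eigenvectorBasis
  have hsub : ∀ j ∈ ({k, l} : Finset (Fin n)),
      toEuclideanLin A (b j) - μ • b j = toEuclideanLin (A - B) (b j) := by
    intro j hj
    have hμj : hB.eigenvalues j = μ := by
      rcases mem_insert.1 hj with rfl | hj
      exacts [hk, mem_singleton.1 hj ▸ hl]
    rw [map_sub, LinearMap.sub_apply, hB.toEuclideanLin_eigenvectorBasis, hμj]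
  refine le_of_pow_le_pow_left₀ two_ne_zero (Real.sqrt_nonneg _) ?_
  calc g ^ 2 ≤ ∑ j ∈ {k, l}, ‖toEuclideanLin A (b j) - μ • b j‖ ^ 2 :=
        (isSymmetric_toEuclideanLin_iff.2 hA).le_sum_norm_sub_smul_sq hA.eigenvectorBasis
          hA.toEuclideanLin_eigenvectorBasis hgap b.orthonormal (card_pair hkl)
    _ = ∑ j ∈ {k, l}, ‖toEuclideanLin (A - B) (b j)‖ ^ 2 :=
        sum_congr rfl fun j hj => by rw [hsub j hj]
    _ ≤ frobNorm (A - B) ^ 2 := sum_norm_toEuclideanLin_sq_le_frobNorm_sq _ b.orthonormal _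

end IsHermitian

end Matrix

theorem dist_to_coneDelta_general {n : ℕ} (hn : 2 ≤ n) (A : Matrix (Fin n) (Fin n) ℝ)
    (hA : A.IsHermitian) :
    IsLeast {r : ℝ | ∃ B ∈ coneDelta n, r = frobNorm (A - B)}
      (sInf {r : ℝ | ∃ i j : Fin n, i < j ∧
        r = |hA.eigenvalues i - hA.eigenvalues j| / Real.sqrt 2}) := by
  set gap := fun i j : Fin n => |hA.eigenvalues i - hA.eigenvalues j| / √2
  set S := {r : ℝ | ∃ i j : Fin n, i < j ∧ r = gap i j}
  have hS : S.Finite :=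
    (Set.finite_range fun p : Fin n × Fin n => gap p.1 p.2).subset
      (by rintro r ⟨i, j, -, rfl⟩; exact ⟨(i, j), rfl⟩)
  have hS₀ : S.Nonempty := ⟨_, ⟨0, by omega⟩, ⟨1, by omega⟩, Fin.mk_lt_mk.2 one_pos, rfl⟩
  obtain ⟨i, j, hij, hmin⟩ := hS₀.csInf_mem hS
  refine ⟨?_, ?_⟩
  · obtain ⟨B, hB, hAB⟩ := hA.exists_mem_coneDelta_frobNorm_sub_eq hij.ne
    exact ⟨B, hB, hmin.trans hAB.symm⟩
  · rintro r ⟨B, hB, rfl⟩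
    refine hA.le_frobNorm_sub_of_mem_coneDelta (fun k l hkl => ?_) hB
    rcases hkl.lt_or_gt with h | h
    · exact csInf_le hS.bddBelow ⟨k, l, h, rfl⟩
    · rw [abs_sub_comm]
      exact csInf_le hS.bddBelow ⟨l, k, h, rfl⟩

/-- for a symmetric matrix `A` with pairwise distinct eigenvalues
`λ_1, …, λ_n`, the distance from `A` to `C(Δ)` is attained and equals
`min_{i<j} |λ_i - λ_j| / √2`. -/
theorem dist_to_coneDelta {n : ℕ} (hn : 2 ≤ n) (A : Matrix (Fin n) (Fin n) ℝ)
    (hA : A.IsHermitian) (hinj : Function.Injective hA.eigenvalues) :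
    IsLeast {r : ℝ | ∃ B ∈ coneDelta n, r = frobNorm (A - B)}
      (sInf {r : ℝ | ∃ i j : Fin n, i < j ∧
        r = |hA.eigenvalues i - hA.eigenvalues j| / Real.sqrt 2}) :=
  dist_to_coneDelta_general hn A hA
end
end

section
/- Let A ∈ Sym(n,ℝ) with ‖A‖ = 1 have pairwise distinct eigenvalues λ_1, …, λ_n. Then the spherical (geodesic) distance from A to the discriminant Δ satisfies min_{B ∈ Δ} arccos(tr(AB)) = arcsin( min_{1 ≤ i < j ≤ n} |λ_i − λ_j| / √2 ). -/
/-!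
Diagonalise `A = U diag(λ) Uᵀ` and `B = V diag(μ) Vᵀ`. With `W = UᵀV` orthogonal,
`tr(AB) = Σ λₖ μᵢ Wₖᵢ²`, and `(Wₖᵢ²)` is doubly stochastic, so by Birkhoff's theorem `tr(AB)` is
at most the largest `Σ λₖ μ_{σ(k)}`. If `μᵢ = μⱼ`, such a sum only sees the orthogonal projection
of `λ` onto the hyperplane `x_{σ⁻¹ i} = x_{σ⁻¹ j}`, whose squared norm is
`1 - (λ_{σ⁻¹ i} - λ_{σ⁻¹ j})² / 2`; Cauchy–Schwarz gives `tr(AB) ≤ √(1 - G²)` with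
`G = minᵢ<ⱼ |λᵢ - λⱼ| / √2`. For a pair realising the minimum, the normalised projection gives
the eigenvalues of a matrix of `Δ` attaining the bound, and `arccos √(1 - G²) = arcsin G`.
-/

open MeasureTheory Matrix Polynomial
open scoped Classical ENNReal

noncomputable section

/-- `A` has at least two equal eigenvalues. -/
def hasRepEig {n : ℕ} (A : Matrix (Fin n) (Fin n) ℝ) : Prop :=
  ∃ μ : ℝ, 2 ≤ A.charpoly.rootMultiplicity μ

/-- The discriminant `Δ`: unit-Frobenius-norm real symmetric matrices with a
repeated eigenvalue. -/
def discSet (n : ℕ) : Set (Matrix (Fin n) (Fin n) ℝ) :=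
  {A | A.IsSymm ∧ frobNorm A = 1 ∧ hasRepEig A}

open Function

section DotProduct

variable {ι : Type*} [Fintype ι]

lemma sq_dotProduct_le {R : Type*} [CommRing R] [LinearOrder R] [IsStrictOrderedRing R]
    (v w : ι → R) : (v ⬝ᵥ w) ^ 2 ≤ (v ⬝ᵥ v) * (w ⬝ᵥ w) := by
  simpa only [dotProduct, sq] using Finset.sum_mul_sq_le_sq_mul_sq Finset.univ v w

variable [DecidableEq ι] {d e : ι → ℝ} {p q : ι}

/-- The orthogonal projection of `d` onto the hyperplane `{e | e p = e q}`. -/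
def pairAverage (d : ι → ℝ) (p q : ι) : ι → ℝ :=
  d - ((d p - d q) / 2) • (Pi.single p 1 - Pi.single q 1)

lemma pairAverage_dotProduct (he : e p = e q) : pairAverage d p q ⬝ᵥ e = d ⬝ᵥ e := by
  simp [pairAverage, sub_dotProduct, single_dotProduct, he]

omit [Fintype ι] in
lemma pairAverage_apply_left (hpq : p ≠ q) : pairAverage d p q p = (d p + d q) / 2 := by
  simp only [pairAverage, Pi.sub_apply, Pi.smul_apply, Pi.single_eq_same, Pi.single_eq_of_ne hpq,
    smul_eq_mul]
  ring

omit [Fintype ι] in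
lemma pairAverage_apply_right (hpq : p ≠ q) : pairAverage d p q q = (d p + d q) / 2 := by
  simp only [pairAverage, Pi.sub_apply, Pi.smul_apply, Pi.single_eq_same,
    Pi.single_eq_of_ne hpq.symm, smul_eq_mul]
  ring

lemma pairAverage_dotProduct_self (hpq : p ≠ q) :
    pairAverage d p q ⬝ᵥ pairAverage d p q = d ⬝ᵥ d - (d p - d q) ^ 2 / 2 := by
  rw [pairAverage_dotProduct (by rw [pairAverage_apply_left hpq, pairAverage_apply_right hpq])]
  simp only [pairAverage, dotProduct_comm d, sub_dotProduct, smul_dotProduct, single_dotProduct,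
    smul_eq_mul]
  ring

lemma dotProduct_le_sqrt (hd : d ⬝ᵥ d = 1) (he : e ⬝ᵥ e = 1) (hpq : p ≠ q) (hepq : e p = e q) :
    d ⬝ᵥ e ≤ √(1 - (d p - d q) ^ 2 / 2) := by
  rw [← hd, ← pairAverage_dotProduct_self hpq, ← pairAverage_dotProduct hepq]
  refine (le_abs_self _).trans (Real.abs_le_sqrt ?_)
  simpa [he] using sq_dotProduct_le (pairAverage d p q) e

lemma dotProduct_le_sqrt_of_not_injective (hd : d ⬝ᵥ d = 1) (he : e ⬝ᵥ e = 1)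
    (he_inj : ¬Injective e) (hmin : ∀ k l, k ≠ l → |d p - d q| ≤ |d k - d l|) :
    d ⬝ᵥ e ≤ √(1 - (d p - d q) ^ 2 / 2) := by
  obtain ⟨k, l, hekl, hkl⟩ := not_injective_iff.mp he_inj
  refine (dotProduct_le_sqrt hd he hkl hekl).trans (Real.sqrt_le_sqrt ?_)
  have := sq_le_sq.mpr (hmin k l hkl)
  linarith

lemma exists_dotProduct_eq_sqrt (hd : d ⬝ᵥ d = 1) (hpq : p ≠ q) :
    ∃ e : ι → ℝ, e ⬝ᵥ e = 1 ∧ e p = e q ∧ d ⬝ᵥ e = √(1 - (d p - d q) ^ 2 / 2) := by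
  set P := pairAverage d p q
  have hPP : P ⬝ᵥ P = 1 - (d p - d q) ^ 2 / 2 :=
    (pairAverage_dotProduct_self hpq).trans (by rw [hd])
  rw [← hPP]
  have hPp : P p = (d p + d q) / 2 := pairAverage_apply_left hpq
  have hPq : P q = (d p + d q) / 2 := pairAverage_apply_right hpq
  have hdP : d ⬝ᵥ P = P ⬝ᵥ P := (pairAverage_dotProduct (hPp.trans hPq.symm)).symm
  by_cases hP : P = 0
  -- then `d` is orthogonal to the whole hyperplane and any unit vector in it will do
  · have hdpq : d p + d q = 0 := by simpa [hP] using hPp.symm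
    refine ⟨(√2)⁻¹ • (Pi.single p 1 + Pi.single q 1), ?_, by simp [hpq, hpq.symm], ?_⟩
    · simp only [smul_dotProduct, dotProduct_smul, add_dotProduct, dotProduct_add,
        single_dotProduct, Pi.single_eq_same, Pi.single_eq_of_ne hpq, Pi.single_eq_of_ne hpq.symm,
        smul_eq_mul]
      field_simp
      norm_num
    · simp [hP, dotProduct_add, ← mul_add, hdpq]
  · have hs : 0 < P ⬝ᵥ P := lt_of_le_of_ne (Finset.sum_nonneg fun i _ => mul_self_nonneg (P i))
      (Ne.symm (dotProduct_self_eq_zero.not.mpr hP))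
    refine ⟨(√(P ⬝ᵥ P))⁻¹ • P, ?_, by simp [hPp, hPq], ?_⟩
    · rw [smul_dotProduct, dotProduct_smul, smul_eq_mul, smul_eq_mul, ← mul_assoc, ← mul_inv,
        Real.mul_self_sqrt hs.le, inv_mul_cancel₀ hs.ne']
    · rw [dotProduct_smul, hdP, smul_eq_mul, ← div_eq_inv_mul, Real.div_sqrt]

end DotProduct

namespace Matrix

lemma dotProduct_mulVec_le_of_mem_doublyStochastic {R ι : Type*} [Field R] [LinearOrder R]
    [IsStrictOrderedRing R] [Fintype ι] [DecidableEq ι] {S : Matrix ι ι R}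
    (hS : S ∈ doublyStochastic R ι) {d e : ι → R} {c : R}
    (h : ∀ σ : Equiv.Perm ι, d ⬝ᵥ (e ∘ σ) ≤ c) : d ⬝ᵥ (S *ᵥ e) ≤ c := by
  have hlin : IsLinearMap R fun M : Matrix ι ι R => d ⬝ᵥ (M *ᵥ e) :=
    ⟨fun M N => by simp [add_mulVec, dotProduct_add],
      fun a M => by simp [smul_mulVec, dotProduct_smul]⟩
  rw [← SetLike.mem_coe, doublyStochastic_eq_convexHull_permMatrix] at hS
  refine convexHull_min ?_ (convex_halfSpace_le hlin c) hS
  rintro _ ⟨σ, rfl⟩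
  simpa [PEquiv.toMatrix_toPEquiv_mulVec] using h σ

section Conjugation

variable {R ι : Type*} [CommRing R] [Fintype ι] [DecidableEq ι]

lemma trace_diagonal_mul_diagonal_mul_transpose (W : Matrix ι ι R) (d e : ι → R) :
    trace (diagonal d * W * diagonal e * Wᵀ) = d ⬝ᵥ (of (fun k i => W k i ^ 2) *ᵥ e) := by
  have hDWE : diagonal d * W * diagonal e = of fun k i => d k * W k i * e i := by ext; simp
  simp only [hDWE, trace, Matrix.diag_apply, mul_apply, transpose_apply, dotProduct, mulVec,
    of_apply, Finset.mul_sum]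
  exact Finset.sum_congr rfl fun k _ => Finset.sum_congr rfl fun i _ => by ring

lemma trace_conj_diagonal_mul_conj_diagonal (U V : Matrix ι ι R) (d e : ι → R) :
    trace (U * diagonal d * Uᵀ * (V * diagonal e * Vᵀ)) =
      d ⬝ᵥ (of (fun k i => (Uᵀ * V) k i ^ 2) *ᵥ e) := by
  rw [← trace_diagonal_mul_diagonal_mul_transpose, transpose_mul, transpose_transpose]
  simp only [Matrix.mul_assoc]
  rw [trace_mul_comm U]
  simp only [Matrix.mul_assoc]

lemma trace_conj_diagonal_mul_self {U : Matrix ι ι R} (hU : U ∈ orthogonalGroup ι R)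
    (d e : ι → R) : trace (U * diagonal d * Uᵀ * (U * diagonal e * Uᵀ)) = d ⬝ᵥ e := by
  have hUU : Uᵀ * U = 1 := (mem_orthogonalGroup_iff' ι R).mp hU
  have : U * diagonal d * Uᵀ * (U * diagonal e * Uᵀ) = U * (diagonal d * diagonal e) * Uᵀ := by
    simp only [Matrix.mul_assoc, ← Matrix.mul_assoc Uᵀ, hUU, Matrix.one_mul]
  rw [this, trace_mul_cycle, hUU, Matrix.one_mul, diagonal_mul_diagonal, trace_diagonal]
  rfl

lemma isSymm_conj_diagonal (U : Matrix ι ι R) (d : ι → R) : (U * diagonal d * Uᵀ).IsSymm := by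
  simp [IsSymm, Matrix.mul_assoc]

lemma charpoly_conj_diagonal {U : Matrix ι ι R} (hU : U ∈ orthogonalGroup ι R) (d : ι → R) :
    (U * diagonal d * Uᵀ).charpoly = ∏ i, (X - C (d i)) := by
  rw [Matrix.mul_assoc, charpoly_mul_comm, Matrix.mul_assoc, (mem_orthogonalGroup_iff' ι R).mp hU,
    Matrix.mul_one, charpoly_diagonal]

lemma of_sq_mem_doublyStochastic [LinearOrder R] [IsStrictOrderedRing R] {W : Matrix ι ι R}
    (hW : W ∈ orthogonalGroup ι R) : of (fun k i => W k i ^ 2) ∈ doublyStochastic R ι := by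
  refine mem_doublyStochastic_iff_sum.mpr ⟨fun _ _ => sq_nonneg _, fun k => ?_, fun i => ?_⟩
  · simpa [mul_apply, sq] using congrFun (congrFun ((mem_orthogonalGroup_iff ι R).mp hW) k) k
  · simpa [mul_apply, sq] using congrFun (congrFun ((mem_orthogonalGroup_iff' ι R).mp hW) i) i

end Conjugation

section Hermitian

variable {ι : Type*} [Fintype ι] [DecidableEq ι]

lemma IsHermitian.eq_conj_diagonal {A : Matrix ι ι ℝ} (hA : A.IsHermitian) :
    A = (hA.eigenvectorUnitary : Matrix ι ι ℝ) * diagonal hA.eigenvalues *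
      (hA.eigenvectorUnitary : Matrix ι ι ℝ)ᵀ := by
  conv_lhs => rw [hA.spectral_theorem, Unitary.conjStarAlgAut_apply]
  simp [star_eq_conjTranspose]

lemma IsHermitian.trace_mul_le {A B : Matrix ι ι ℝ} (hA : A.IsHermitian) (hB : B.IsHermitian)
    (hA_norm : hA.eigenvalues ⬝ᵥ hA.eigenvalues = 1)
    (hB_norm : hB.eigenvalues ⬝ᵥ hB.eigenvalues = 1) (hB_rep : ¬Injective hB.eigenvalues)
    {p q : ι} (hmin : ∀ k l, k ≠ l →
      |hA.eigenvalues p - hA.eigenvalues q| ≤ |hA.eigenvalues k - hA.eigenvalues l|) :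
    trace (A * B) ≤ √(1 - (hA.eigenvalues p - hA.eigenvalues q) ^ 2 / 2) := by
  set U : Matrix ι ι ℝ := ↑hA.eigenvectorUnitary
  set V : Matrix ι ι ℝ := ↑hB.eigenvectorUnitary
  have hW : Uᵀ * V ∈ orthogonalGroup ι ℝ :=
    mul_mem (transpose_mem_unitaryGroup_iff.mpr hA.eigenvectorUnitary.2) hB.eigenvectorUnitary.2
  calc trace (A * B)
      = trace (U * diagonal hA.eigenvalues * Uᵀ * (V * diagonal hB.eigenvalues * Vᵀ)) := by
        rw [← hA.eq_conj_diagonal, ← hB.eq_conj_diagonal]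
    _ = hA.eigenvalues ⬝ᵥ (of (fun k i => (Uᵀ * V) k i ^ 2) *ᵥ hB.eigenvalues) :=
        trace_conj_diagonal_mul_conj_diagonal U V _ _
    _ ≤ _ := by
      refine dotProduct_mulVec_le_of_mem_doublyStochastic (of_sq_mem_doublyStochastic hW)
        fun σ => dotProduct_le_sqrt_of_not_injective hA_norm ?_ ?_ hmin
      · rw [← hB_norm]
        exact Equiv.sum_comp σ fun i => hB.eigenvalues i * hB.eigenvalues i
      · exact fun h => hB_rep (h.of_comp_right σ.surjective)

end Hermitian

end Matrix

section Discriminant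

variable {n : ℕ}

lemma frobNorm_conj_diagonal {U : Matrix (Fin n) (Fin n) ℝ} (hU : U ∈ orthogonalGroup (Fin n) ℝ)
    (d : Fin n → ℝ) : frobNorm (U * diagonal d * Uᵀ) = √(d ⬝ᵥ d) := by
  rw [frobNorm, (isSymm_conj_diagonal U d).eq, trace_conj_diagonal_mul_self hU]

lemma hasRepEig_iff_not_injective {A : Matrix (Fin n) (Fin n) ℝ} {d : Fin n → ℝ}
    (h : A.charpoly = ∏ i, (X - C (d i))) : hasRepEig A ↔ ¬Injective d := by
  have hroots : A.charpoly.roots = Finset.univ.val.map d := by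
    rw [h, roots_prod _ _ (Finset.prod_ne_zero_iff.mpr fun i _ => X_sub_C_ne_zero (d i))]
    simp
  rw [hasRepEig, ← Fintype.nodup_map_univ_iff_injective, ← hroots, Multiset.nodup_iff_count_le_one]
  simp only [count_roots, not_forall, not_le]
  rfl

lemma Matrix.IsHermitian.frobNorm_eq {A : Matrix (Fin n) (Fin n) ℝ} (hA : A.IsHermitian) :
    frobNorm A = √(hA.eigenvalues ⬝ᵥ hA.eigenvalues) := by
  conv_lhs => rw [hA.eq_conj_diagonal]
  exact frobNorm_conj_diagonal hA.eigenvectorUnitary.2 _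

lemma Matrix.IsHermitian.hasRepEig_iff {A : Matrix (Fin n) (Fin n) ℝ} (hA : A.IsHermitian) :
    hasRepEig A ↔ ¬Injective hA.eigenvalues :=
  hasRepEig_iff_not_injective (by simpa using hA.charpoly_eq)

lemma conj_diagonal_mem_discSet {U : Matrix (Fin n) (Fin n) ℝ}
    (hU : U ∈ orthogonalGroup (Fin n) ℝ) {d : Fin n → ℝ} (hd : d ⬝ᵥ d = 1) (hd_rep : ¬Injective d) :
    U * diagonal d * Uᵀ ∈ discSet n :=
  ⟨isSymm_conj_diagonal U d, by rw [frobNorm_conj_diagonal hU, hd, Real.sqrt_one],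
    (hasRepEig_iff_not_injective (charpoly_conj_diagonal hU d)).mpr hd_rep⟩

theorem isGreatest_trace_mul_discSet {A : Matrix (Fin n) (Fin n) ℝ} (hA : A.IsHermitian)
    (hnorm : frobNorm A = 1) {p q : Fin n} (hpq : p ≠ q) (hmin : ∀ k l, k ≠ l →
      |hA.eigenvalues p - hA.eigenvalues q| ≤ |hA.eigenvalues k - hA.eigenvalues l|) :
    IsGreatest {t | ∃ B ∈ discSet n, t = trace (A * B)}
      (√(1 - (hA.eigenvalues p - hA.eigenvalues q) ^ 2 / 2)) := by
  have hA_norm : hA.eigenvalues ⬝ᵥ hA.eigenvalues = 1 := by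
    rwa [hA.frobNorm_eq, Real.sqrt_eq_one] at hnorm
  constructor
  · obtain ⟨ν, hν, hνpq, hAν⟩ := exists_dotProduct_eq_sqrt hA_norm hpq
    have hU := hA.eigenvectorUnitary.2
    refine ⟨_, conj_diagonal_mem_discSet hU hν fun h => hpq (h hνpq), ?_⟩
    rw [← hAν, ← trace_conj_diagonal_mul_self hU, ← hA.eq_conj_diagonal]
  · rintro _ ⟨B, ⟨hB_symm, hB_norm, hB_rep⟩, rfl⟩
    have hB : B.IsHermitian := (conjTranspose_eq_transpose_of_trivial B).trans hB_symm
    rw [hB.frobNorm_eq, Real.sqrt_eq_one] at hB_norm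
    exact hA.trace_mul_le hB hA_norm hB_norm (hB.hasRepEig_iff.mp hB_rep) hmin

end Discriminant

lemma exists_sInf_abs_sub_div_eq {ι : Type*} [LinearOrder ι] [Finite ι] [Nontrivial ι]
    (f : ι → ℝ) {c : ℝ} (hc : 0 < c) :
    ∃ p q, p ≠ q ∧ sInf {r | ∃ i j, i < j ∧ r = |f i - f j| / c} = |f p - f q| / c ∧
      ∀ k l, k ≠ l → |f p - f q| ≤ |f k - f l| := by
  set S := {r : ℝ | ∃ i j, i < j ∧ r = |f i - f j| / c}
  have hS : S.Finite := (Set.finite_range fun x : ι × ι => |f x.1 - f x.2| / c).subset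
    (by rintro _ ⟨i, j, -, rfl⟩; exact ⟨(i, j), rfl⟩)
  obtain ⟨i, j, hij⟩ := exists_pair_lt ι
  have hne : S.Nonempty := ⟨_, i, j, hij, rfl⟩
  obtain ⟨p, q, hpq, hpq_min⟩ := hne.csInf_mem hS
  have hle : ∀ k l, k < l → |f p - f q| ≤ |f k - f l| := fun k l hkl =>
    (div_le_div_iff_of_pos_right hc).mp (hpq_min ▸ csInf_le hS.bddBelow ⟨k, l, hkl, rfl⟩)
  refine ⟨p, q, hpq.ne, hpq_min, fun k l hkl => ?_⟩
  rcases hkl.lt_or_gt with h | h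
  · exact hle k l h
  · rw [abs_sub_comm (f k)]
    exact hle l k h

theorem spherical_dist_to_disc_general {n : ℕ} (hn : 2 ≤ n) (A : Matrix (Fin n) (Fin n) ℝ)
    (hA : A.IsHermitian) (hnorm : frobNorm A = 1) :
    IsLeast {r : ℝ | ∃ B ∈ discSet n, r = Real.arccos (Matrix.trace (A * B))}
      (Real.arcsin (sInf {r : ℝ | ∃ i j : Fin n, i < j ∧
        r = |hA.eigenvalues i - hA.eigenvalues j| / Real.sqrt 2})) := by
  have : Nontrivial (Fin n) := Fin.nontrivial_iff_two_le.mpr hn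
  obtain ⟨p, q, hpq, hG, hmin⟩ :=
    exists_sInf_abs_sub_div_eq hA.eigenvalues (Real.sqrt_pos.mpr two_pos)
  have hG_sq : (|hA.eigenvalues p - hA.eigenvalues q| / √2) ^ 2 =
      (hA.eigenvalues p - hA.eigenvalues q) ^ 2 / 2 := by
    rw [div_pow, sq_abs, Real.sq_sqrt zero_le_two]
  rw [hG, Real.arcsin_eq_arccos (by positivity), hG_sq]
  obtain ⟨⟨B, hB, hB_trace⟩, hmax⟩ := isGreatest_trace_mul_discSet hA hnorm hpq hmin
  refine ⟨⟨B, hB, by rw [hB_trace]⟩, ?_⟩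
  rintro _ ⟨B', hB', rfl⟩
  exact Real.arccos_le_arccos (hmax ⟨B', hB', rfl⟩)

/-- for a unit-norm symmetric `A` with pairwise distinct eigenvalues,
the spherical distance `min_{B ∈ Δ} arccos(tr(AB))` is attained and equals
`arcsin(min_{i<j} |λ_i - λ_j| / √2)`. -/
theorem spherical_dist_to_disc {n : ℕ} (hn : 2 ≤ n) (A : Matrix (Fin n) (Fin n) ℝ)
    (hA : A.IsHermitian) (hnorm : frobNorm A = 1)
    (hinj : Function.Injective hA.eigenvalues) :
    IsLeast {r : ℝ | ∃ B ∈ discSet n, r = Real.arccos (Matrix.trace (A * B))}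
      (Real.arcsin (sInf {r : ℝ | ∃ i j : Fin n, i < j ∧
        r = |hA.eigenvalues i - hA.eigenvalues j| / Real.sqrt 2})) :=
  spherical_dist_to_disc_general hn A hA hnorm
end
end

section
/- Let w = (w_1, …, w_n) ∈ ℕⁿ satisfy Σ_{i=1}^n i·w_i = n and w_1 < n, and let S_w = {B ∈ Sym(n,ℝ) : for each i ∈ {1,…,n}, B has exactly w_i distinct eigenvalues of algebraic multiplicity exactly i}. Let A ∈ Sym(n,ℝ) have pairwise distinct eigenvalues λ = (λ_1, …, λ_n) ∈ ℝⁿ. Then inf_{B ∈ S_w} ‖A − B‖ = inf_{μ ∈ M_w} ‖λ − μ‖, where M_w ⊂ ℝⁿ is the set of vectors μ such that for each i ∈ {1,…,n} exactly w_i distinct real values occur exactly i times among the coordinates of μ, and ‖λ − μ‖ is the Euclidean norm on ℝⁿ. -/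
/-!
A symmetric matrix lies in `S_w` exactly when its vector of eigenvalues lies in `M_w`, and `M_w` is
invariant under permutations of the coordinates. Conjugating `diag μ` by an orthogonal matrix that
diagonalises `A` gives, for every `μ ∈ M_w`, a point of `S_w` at distance `‖λ - μ‖` from `A`.
Conversely, the Hoffman–Wielandt inequality bounds `‖A - B‖` below by `‖λ - ν ∘ σ‖` for some
permutation `σ`, where `ν` are the eigenvalues of `B`: if `A = U diag λ Uᵀ`, `B = V diag ν Vᵀ` and
`Q = UᵀV`, then `‖A - B‖² = ∑ᵢⱼ (λᵢ - νⱼ)² Qᵢⱼ²` is a linear function of the doubly stochastic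
matrix `(Qᵢⱼ²)`, so by Birkhoff's theorem it is at least its value at some permutation matrix.
-/

open Matrix Polynomial
open scoped Classical

noncomputable section

/-- The stratum `S_w`: real symmetric matrices having, for each `i ∈ {1,…,n}`
(encoded by `i : Fin n`, multiplicity `i.1 + 1`), exactly `w i` distinct eigenvalues
of algebraic multiplicity exactly `i.1 + 1`. -/
def stratum {n : ℕ} (w : Fin n → ℕ) : Set (Matrix (Fin n) (Fin n) ℝ) :=
  {B | B.IsSymm ∧ ∀ i : Fin n,
    {μ : ℝ | B.charpoly.rootMultiplicity μ = i.1 + 1}.ncard = w i}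

/-- The set `M_w ⊂ ℝⁿ` of vectors such that, for each `i ∈ {1,…,n}`, exactly `w i`
distinct real values occur exactly `i.1 + 1` times among the coordinates. -/
def Mw {n : ℕ} (w : Fin n → ℕ) : Set (Fin n → ℝ) :=
  {μ | ∀ i : Fin n,
    {t : ℝ | (Finset.univ.filter fun j => μ j = t).card = i.1 + 1}.ncard = w i}

theorem Polynomial.rootMultiplicity_prod_X_sub_C {R ι : Type*} [CommRing R] [IsDomain R]
    [Fintype ι] (d : ι → R) (t : R) :
    (∏ i, (X - C (d i))).rootMultiplicity t = (Finset.univ.filter fun i => d i = t).card := by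
  rw [← count_roots, Finset.prod_eq_multiset_prod,
    show (fun i => X - C (d i)) = (fun a => X - C a) ∘ d from rfl, ← Multiset.map_map,
    roots_multiset_prod_X_sub_C, Multiset.count_map, Finset.card_def, Finset.filter_val]
  simp_rw [eq_comm]

theorem comp_perm_mem_Mw {n : ℕ} {w : Fin n → ℕ} {μ : Fin n → ℝ} (hμ : μ ∈ Mw w)
    (σ : Equiv.Perm (Fin n)) : μ ∘ σ ∈ Mw w := by
  have hcard (t : ℝ) : (Finset.univ.filter fun j => (μ ∘ σ) j = t).card =
      (Finset.univ.filter fun j => μ j = t).card :=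
    Finset.card_equiv σ (by simp)
  intro i
  simpa only [hcard] using hμ i

theorem mem_stratum_iff_of_charpoly_eq {n : ℕ} (w : Fin n → ℕ) {B : Matrix (Fin n) (Fin n) ℝ}
    (hB : B.IsSymm) {d : Fin n → ℝ} (hd : B.charpoly = ∏ i, (X - C (d i))) :
    B ∈ stratum w ↔ d ∈ Mw w := by
  simp only [stratum, Mw, Set.mem_ofPred_eq, hB, true_and, hd, rootMultiplicity_prod_X_sub_C]

theorem Matrix.IsHermitian.mem_stratum_iff {n : ℕ} (w : Fin n → ℕ)
    {B : Matrix (Fin n) (Fin n) ℝ} (hB : B.IsHermitian) :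
    B ∈ stratum w ↔ hB.eigenvalues ∈ Mw w :=
  mem_stratum_iff_of_charpoly_eq w (isHermitian_iff_isSymm.1 hB) (by simpa using hB.charpoly_eq)

theorem unitary_mul_diagonal_mul_star_mem_stratum {n : ℕ} {w : Fin n → ℕ}
    {U : Matrix (Fin n) (Fin n) ℝ} (hU : U ∈ unitaryGroup (Fin n) ℝ) {μ : Fin n → ℝ}
    (hμ : μ ∈ Mw w) : U * diagonal μ * star U ∈ stratum w := by
  refine (mem_stratum_iff_of_charpoly_eq w ?_ ?_).2 hμ
  · exact isHermitian_iff_isSymm.1 (isHermitian_mul_mul_conjTranspose U (isHermitian_diagonal μ))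
  · rw [charpoly_mul_comm, ← mul_assoc, (mem_unitaryGroup_iff').1 hU, one_mul, charpoly_diagonal]

theorem Matrix.IsHermitian.eq_mul_diagonal_mul_star {n : Type*} [Fintype n] [DecidableEq n]
    {A : Matrix n n ℝ} (hA : A.IsHermitian) :
    A = (hA.eigenvectorUnitary : Matrix n n ℝ) * diagonal hA.eigenvalues *
      star (hA.eigenvectorUnitary : Matrix n n ℝ) := by
  simpa using hA.spectral_theorem

theorem Matrix.trace_conjTranspose_mul_self_unitary_mul_mul {n R : Type*} [Fintype n]
    [DecidableEq n] [CommRing R] [StarRing R] {U V : Matrix n n R}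
    (hU : U ∈ unitaryGroup n R) (hV : V ∈ unitaryGroup n R) (M : Matrix n n R) :
    trace ((U * M * V)ᴴ * (U * M * V)) = trace (Mᴴ * M) := by
  have hU' : Uᴴ * U = 1 := (mem_unitaryGroup_iff').1 hU
  have hV' : V * Vᴴ = 1 := (mem_unitaryGroup_iff).1 hV
  calc trace ((U * M * V)ᴴ * (U * M * V)) = trace (Vᴴ * (Mᴴ * (Uᴴ * U) * M * V)) := by
        simp only [conjTranspose_mul, Matrix.mul_assoc]
    _ = trace (Mᴴ * M * (V * Vᴴ)) := by
        rw [trace_mul_comm, hU', Matrix.mul_one]; simp only [Matrix.mul_assoc]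
    _ = trace (Mᴴ * M) := by rw [hV', Matrix.mul_one]

theorem Matrix.trace_transpose_mul_self {m n R : Type*} [Fintype m] [Fintype n] [CommSemiring R]
    (M : Matrix m n R) : trace (Mᵀ * M) = ∑ i, ∑ j, M i j ^ 2 := by
  simp only [trace, diag_apply, mul_apply, transpose_apply, sq]
  exact Finset.sum_comm

theorem Matrix.trace_transpose_mul_self_sub_conj_diagonal {n : Type*} [Fintype n]
    [DecidableEq n] {U V : Matrix n n ℝ} (hU : U ∈ unitaryGroup n ℝ) (hV : V ∈ unitaryGroup n ℝ)
    (d e : n → ℝ) :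
    trace ((U * diagonal d * star U - V * diagonal e * star V)ᵀ *
        (U * diagonal d * star U - V * diagonal e * star V)) =
      ∑ i, ∑ j, (d i - e j) ^ 2 * (star U * V) i j ^ 2 := by
  have hconj : U * diagonal d * star U - V * diagonal e * star V =
      U * (diagonal d * (star U * V) - (star U * V) * diagonal e) * star V := by
    simp only [Matrix.mul_sub, Matrix.sub_mul, ← Matrix.mul_assoc, (mem_unitaryGroup_iff).1 hU,
      Matrix.one_mul]
    simp only [Matrix.mul_assoc, (mem_unitaryGroup_iff).1 hV, Matrix.mul_one]
  rw [← conjTranspose_eq_transpose_of_trivial, hconj,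
    trace_conjTranspose_mul_self_unitary_mul_mul hU (Unitary.star_mem hV),
    conjTranspose_eq_transpose_of_trivial, trace_transpose_mul_self]
  simp only [sub_apply, mul_diagonal, diagonal_mul]
  congr! 2 with i j
  ring

theorem sq_entries_mem_doublyStochastic {n : Type*} [Fintype n] [DecidableEq n]
    {Q : Matrix n n ℝ} (hQ : Q ∈ unitaryGroup n ℝ) :
    of (fun i j => Q i j ^ 2) ∈ doublyStochastic ℝ n := by
  refine mem_doublyStochastic_iff_sum.2 ⟨fun i j => sq_nonneg _, fun i => ?_, fun j => ?_⟩
  · simpa [mul_apply, sq] using congr_fun₂ ((mem_unitaryGroup_iff).1 hQ) i i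
  · simpa [mul_apply, sq] using congr_fun₂ ((mem_unitaryGroup_iff').1 hQ) j j

theorem exists_perm_sum_le_of_mem_doublyStochastic {n : Type*} [Fintype n] [DecidableEq n]
    (c : n → n → ℝ) {P : Matrix n n ℝ} (hP : P ∈ doublyStochastic ℝ n) :
    ∃ σ : Equiv.Perm n, ∑ i, c i (σ i) ≤ ∑ i, ∑ j, c i j * P i j := by
  let f : Matrix n n ℝ →ₗ[ℝ] ℝ := ∑ i, ∑ j, c i j • entryLinearMap ℝ ℝ i j
  have hf (M : Matrix n n ℝ) : f M = ∑ i, ∑ j, c i j * M i j := by simp [f]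
  rw [← SetLike.mem_coe, doublyStochastic_eq_convexHull_permMatrix] at hP
  obtain ⟨_, ⟨σ, rfl⟩, hσ⟩ :=
    (f.concaveOn convex_univ).exists_le_of_mem_convexHull (Set.subset_univ _) hP
  refine ⟨σ, ?_⟩
  simpa [hf, PEquiv.toMatrix_apply] using hσ

theorem Matrix.IsHermitian.exists_perm_sum_sq_sub_eigenvalues_le {n : Type*} [Fintype n]
    [DecidableEq n] {A B : Matrix n n ℝ} (hA : A.IsHermitian) (hB : B.IsHermitian) :
    ∃ σ : Equiv.Perm n, ∑ i, (hA.eigenvalues i - hB.eigenvalues (σ i)) ^ 2 ≤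
      trace ((A - B)ᵀ * (A - B)) := by
  have hU := hA.eigenvectorUnitary.2
  have hV := hB.eigenvectorUnitary.2
  have htrace := trace_transpose_mul_self_sub_conj_diagonal hU hV hA.eigenvalues hB.eigenvalues
  rw [← hA.eq_mul_diagonal_mul_star, ← hB.eq_mul_diagonal_mul_star] at htrace
  rw [htrace]
  exact exists_perm_sum_le_of_mem_doublyStochastic
    (fun i j => (hA.eigenvalues i - hB.eigenvalues j) ^ 2)
    (sq_entries_mem_doublyStochastic (mul_mem (Unitary.star_mem hU) hV))

theorem frobNorm_conj_diagonal_sub_conj_diagonal {n : ℕ} {U : Matrix (Fin n) (Fin n) ℝ}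
    (hU : U ∈ unitaryGroup (Fin n) ℝ) (d e : Fin n → ℝ) :
    frobNorm (U * diagonal d * star U - U * diagonal e * star U) = √(∑ i, (d i - e i) ^ 2) := by
  rw [frobNorm, trace_transpose_mul_self_sub_conj_diagonal hU hU, (mem_unitaryGroup_iff').1 hU]
  simp [one_apply]

/-- for symmetric `A` with pairwise distinct eigenvalues `λ`,
`inf_{B ∈ S_w} ‖A - B‖ = inf_{μ ∈ M_w} ‖λ - μ‖`. -/
theorem dist_to_stratum {n : ℕ} (w : Fin n → ℕ)
    (A : Matrix (Fin n) (Fin n) ℝ) (hA : A.IsHermitian) :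
    sInf {r : ℝ | ∃ B ∈ stratum w, r = frobNorm (A - B)} =
      sInf {r : ℝ | ∃ μ ∈ Mw w,
        r = Real.sqrt (∑ i : Fin n, (hA.eigenvalues i - μ i) ^ 2)} := by
  apply csInf_eq_csInf_of_forall_exists_le
  · rintro _ ⟨B, hB, rfl⟩
    have hBh : B.IsHermitian := isHermitian_iff_isSymm.2 hB.1
    obtain ⟨σ, hσ⟩ := hA.exists_perm_sum_sq_sub_eigenvalues_le hBh
    exact ⟨_, ⟨_, comp_perm_mem_Mw ((hBh.mem_stratum_iff w).1 hB) σ, rfl⟩,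
      Real.sqrt_le_sqrt hσ⟩
  · rintro _ ⟨μ, hμ, rfl⟩
    have hU := hA.eigenvectorUnitary.2
    refine ⟨_, ⟨_, unitary_mul_diagonal_mul_star_mem_stratum hU hμ, rfl⟩, ?_⟩
    rw [← frobNorm_conj_diagonal_sub_conj_diagonal hU hA.eigenvalues μ,
      ← hA.eq_mul_diagonal_mul_star]
end
end

section
/- For every integer j ≥ 0, ∫_ℝ det X_j(u) · e^{−u²} du = 2^{2j+1} (2j)! √π (4j+1), where X_j(u) is the 2×2 matrix with rows ( H_{2j}(u), H_{2j}′(u) ) and ( H_{2j+1}(u) − H_{2j}′(u), H_{2j+1}′(u) − H_{2j}″(u) ). -/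
/-!
`H_n` is the evaluation of a polynomial with `H_{n+1} = 2X H_n - H_n'`, hence
`H_{n+1}' = 2(n+1) H_n` and `deg H_n ≤ n`. Since `(p e^{-x²})' = (p' - 2Xp) e^{-x²}` integrates
to zero, integration by parts gives `∫ p H_n e^{-x²} = ∫ p⁽ⁿ⁾ e^{-x²}`: the `H_n` are orthogonal
with `∫ H_n² e^{-x²} = 2ⁿ n! √π`. Expanding `det X_j` with `n = 2j`, the terms
`H_n H_n''` and `H_n' H_{n+1}` integrate to zero, while `H_n H_{n+1}' = 2(n+1) H_n²` and
`(H_n')² = 4n² H_{n-1}²` contribute `(2(n+1) + 2n) 2ⁿ n! √π`.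
-/

open MeasureTheory Matrix
open scoped ENNReal

noncomputable section

/-- The physicist's Hermite polynomial `H_i(x) = (-1)^i e^{x²} (d/dx)^i e^{-x²}`. -/
def physHermite (i : ℕ) : ℝ → ℝ :=
  fun x => (-1 : ℝ) ^ i * Real.exp (x ^ 2) * iteratedDeriv i (fun t => Real.exp (-t ^ 2)) x

/-- The matrix `X_j(u)`. -/
def Xmat (j : ℕ) (u : ℝ) : Matrix (Fin 2) (Fin 2) ℝ :=
  !![physHermite (2 * j) u, deriv (physHermite (2 * j)) u;
     physHermite (2 * j + 1) u - deriv (physHermite (2 * j)) u,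
     deriv (physHermite (2 * j + 1)) u - deriv (deriv (physHermite (2 * j))) u]

open Polynomial

def physHermitePoly (R : Type*) [CommRing R] : ℕ → R[X]
  | 0 => 1
  | n + 1 => 2 * X * physHermitePoly R n - derivative (physHermitePoly R n)

section Algebra

variable {R : Type*} [CommRing R]

@[simp]
lemma physHermitePoly_zero : physHermitePoly R 0 = 1 := rfl

lemma physHermitePoly_succ (n : ℕ) :
    physHermitePoly R (n + 1) =
      2 * X * physHermitePoly R n - derivative (physHermitePoly R n) := rfl

lemma derivative_physHermitePoly_succ (n : ℕ) :
    derivative (physHermitePoly R (n + 1)) = (2 * (n + 1)) • physHermitePoly R n := by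
  induction n with
  | zero => simp [physHermitePoly_succ]
  | succ n ih =>
    rw [physHermitePoly_succ (n + 1), derivative_sub, derivative_mul, ih, derivative_smul]
    simp only [derivative_mul, derivative_X, derivative_ofNat, nsmul_eq_mul, physHermitePoly_succ]
    push_cast
    ring

lemma natDegree_physHermitePoly_le (n : ℕ) : (physHermitePoly R n).natDegree ≤ n := by
  induction n with
  | zero => simp
  | succ n ih =>
    rw [physHermitePoly_succ]
    refine (natDegree_sub_le _ _).trans (max_le ?_ ?_)
    · refine (natDegree_mul_le).trans ?_
      have : (2 * X : R[X]).natDegree ≤ 1 := by compute_degree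
      omega
    · exact (natDegree_derivative_le _).trans (by omega)

lemma iterate_derivative_physHermitePoly_eq_zero {n k : ℕ} (h : n < k) :
    derivative^[k] (physHermitePoly R n) = 0 :=
  iterate_derivative_eq_zero ((natDegree_physHermitePoly_le n).trans_lt h)

end Algebra

lemma hasDerivAt_exp_neg_sq (x : ℝ) :
    HasDerivAt (fun x : ℝ => Real.exp (-x ^ 2)) (-2 * x * Real.exp (-x ^ 2)) x := by
  refine (((hasDerivAt_pow 2 x).neg).exp).congr_deriv ?_
  simp only [Pi.neg_apply, Nat.cast_ofNat, Nat.add_one_sub_one, pow_one]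
  ring

lemma iteratedDeriv_exp_neg_sq (n : ℕ) :
    iteratedDeriv n (fun x : ℝ => Real.exp (-x ^ 2)) =
      fun x => (-1) ^ n * (physHermitePoly ℝ n).eval x * Real.exp (-x ^ 2) := by
  induction n with
  | zero => simp
  | succ n ih =>
    ext x
    rw [iteratedDeriv_succ, ih]
    refine ((((physHermitePoly ℝ n).hasDerivAt x).const_mul _).mul
      (hasDerivAt_exp_neg_sq x)).deriv.trans ?_
    rw [physHermitePoly_succ]
    simp only [eval_sub, eval_mul, eval_X, eval_ofNat, pow_succ]
    ring

lemma physHermite_eq_eval (n : ℕ) : physHermite n = fun x => (physHermitePoly ℝ n).eval x := by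
  ext x
  rw [physHermite, iteratedDeriv_exp_neg_sq, ← mul_assoc, mul_mul_mul_comm, ← pow_add,
    ← two_mul, pow_mul, neg_one_sq, one_pow, one_mul, mul_comm, ← mul_assoc, ← Real.exp_add]
  simp

lemma deriv_physHermite (n : ℕ) :
    deriv (physHermite n) = fun x => (derivative (physHermitePoly ℝ n)).eval x := by
  ext x
  rw [physHermite_eq_eval, Polynomial.deriv]

lemma integrable_eval_mul_exp_neg_sq (p : ℝ[X]) :
    Integrable fun x : ℝ => p.eval x * Real.exp (-x ^ 2) := by
  induction p using Polynomial.induction_on' with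
  | monomial n c =>
    have h := integrable_rpow_mul_exp_neg_mul_sq one_pos
      (neg_one_lt_zero.trans_le (Nat.cast_nonneg n))
    simp only [Real.rpow_natCast, neg_mul, one_mul] at h
    simpa [mul_assoc] using h.const_mul c
  | add p q hp hq => simpa [add_mul] using hp.fun_add hq

def gaussianIntegral : ℝ[X] →ₗ[ℝ] ℝ where
  toFun p := ∫ x, p.eval x * Real.exp (-x ^ 2)
  map_add' p q := by
    simp only [eval_add, add_mul]
    exact integral_add (integrable_eval_mul_exp_neg_sq p) (integrable_eval_mul_exp_neg_sq q)
  map_smul' c p := by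
    simp only [eval_smul, smul_eq_mul, mul_assoc, integral_const_mul, RingHom.id_apply]

lemma gaussianIntegral_apply (p : ℝ[X]) :
    gaussianIntegral p = ∫ x, p.eval x * Real.exp (-x ^ 2) := rfl

lemma gaussianIntegral_one : gaussianIntegral 1 = √Real.pi := by
  rw [gaussianIntegral_apply]
  simpa using integral_gaussian 1

lemma gaussianIntegral_derivative_sub (p : ℝ[X]) :
    gaussianIntegral (derivative p - 2 * X * p) = 0 := by
  refine integral_eq_zero_of_hasDerivAt_of_integrable (fun x => ?_)
    (integrable_eval_mul_exp_neg_sq _) (integrable_eval_mul_exp_neg_sq p)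
  refine ((p.hasDerivAt x).mul (hasDerivAt_exp_neg_sq x)).congr_deriv ?_
  simp only [eval_sub, eval_mul, eval_X, eval_ofNat]
  ring

lemma gaussianIntegral_mul_physHermitePoly_succ (p : ℝ[X]) (n : ℕ) :
    gaussianIntegral (p * physHermitePoly ℝ (n + 1)) =
      gaussianIntegral (derivative p * physHermitePoly ℝ n) := by
  have hparts : p * physHermitePoly ℝ (n + 1) = derivative p * physHermitePoly ℝ n -
      (derivative (p * physHermitePoly ℝ n) - 2 * X * (p * physHermitePoly ℝ n)) := by
    rw [physHermitePoly_succ, derivative_mul]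
    ring
  rw [hparts, map_sub, gaussianIntegral_derivative_sub, sub_zero]

lemma gaussianIntegral_mul_physHermitePoly (p : ℝ[X]) (n : ℕ) :
    gaussianIntegral (p * physHermitePoly ℝ n) = gaussianIntegral (derivative^[n] p) := by
  induction n generalizing p with
  | zero => simp
  | succ n ih => rw [gaussianIntegral_mul_physHermitePoly_succ, ih, Function.iterate_succ_apply]

lemma gaussianIntegral_physHermitePoly_mul_self (n : ℕ) :
    gaussianIntegral (physHermitePoly ℝ n * physHermitePoly ℝ n) =
      2 ^ n * n.factorial * √Real.pi := by
  induction n with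
  | zero => simp [gaussianIntegral_one]
  | succ n ih =>
    rw [gaussianIntegral_mul_physHermitePoly_succ, derivative_physHermitePoly_succ, smul_mul_assoc,
      map_nsmul, ih, nsmul_eq_mul, Nat.factorial_succ]
    push_cast
    ring

lemma gaussianIntegral_derivative_physHermitePoly_mul_self (n : ℕ) :
    gaussianIntegral (derivative (physHermitePoly ℝ n) * derivative (physHermitePoly ℝ n)) =
      2 * n * (2 ^ n * n.factorial * √Real.pi) := by
  cases n with
  | zero => simp
  | succ n =>
    rw [derivative_physHermitePoly_succ, smul_mul_smul_comm, map_nsmul,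
      gaussianIntegral_physHermitePoly_mul_self, nsmul_eq_mul, Nat.factorial_succ]
    push_cast
    ring

def physHermiteDetPoly (n : ℕ) : ℝ[X] :=
  physHermitePoly ℝ n *
      (derivative (physHermitePoly ℝ (n + 1)) - derivative^[2] (physHermitePoly ℝ n)) -
    derivative (physHermitePoly ℝ n) *
      (physHermitePoly ℝ (n + 1) - derivative (physHermitePoly ℝ n))

lemma det_Xmat (j : ℕ) (u : ℝ) : (Xmat j u).det = (physHermiteDetPoly (2 * j)).eval u := by
  simp only [Xmat, det_fin_two_of, deriv_physHermite]
  simp only [physHermiteDetPoly, Polynomial.deriv, physHermite_eq_eval,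
    Function.iterate_succ_apply', Function.iterate_zero_apply, eval_sub, eval_mul]

lemma gaussianIntegral_physHermiteDetPoly (n : ℕ) :
    gaussianIntegral (physHermiteDetPoly n) =
      2 ^ (n + 1) * n.factorial * √Real.pi * (2 * n + 1) := by
  set H := physHermitePoly ℝ
  -- The cross terms pair `H_n`, `H_{n+1}` with polynomials of lower degree.
  have hcross₁ : gaussianIntegral (derivative^[2] (H n) * H n) = 0 := by
    rw [gaussianIntegral_mul_physHermitePoly, ← Function.iterate_add_apply,
      iterate_derivative_physHermitePoly_eq_zero (by omega), map_zero]
  have hcross₂ : gaussianIntegral (derivative (H n) * H (n + 1)) = 0 := by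
    rw [gaussianIntegral_mul_physHermitePoly, ← Function.iterate_succ_apply,
      iterate_derivative_physHermitePoly_eq_zero (by omega), map_zero]
  have hmain : gaussianIntegral (H n * derivative (H (n + 1))) =
      2 * (n + 1) * (2 ^ n * n.factorial * √Real.pi) := by
    rw [derivative_physHermitePoly_succ, mul_smul_comm, map_nsmul,
      gaussianIntegral_physHermitePoly_mul_self, nsmul_eq_mul]
    push_cast
    ring
  calc _ = gaussianIntegral (H n * derivative (H (n + 1))) -
        gaussianIntegral (derivative^[2] (H n) * H n) -
        gaussianIntegral (derivative (H n) * H (n + 1)) +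
        gaussianIntegral (derivative (H n) * derivative (H n)) := by
        simp only [physHermiteDetPoly, ← map_sub, ← map_add]
        congr 1
        ring
    _ = _ := by
      rw [hmain, hcross₁, hcross₂, gaussianIntegral_derivative_physHermitePoly_mul_self, pow_succ]
      ring

/-- for every `j ≥ 0`,
`∫_ℝ det X_j(u) e^{-u²} du = 2^{2j+1} (2j)! √π (4j+1)`. -/
theorem integral_det_Xmat (j : ℕ) :
    (∫ u : ℝ, (Xmat j u).det * Real.exp (-u ^ 2)) =
      2 ^ (2 * j + 1) * (Nat.factorial (2 * j) : ℝ) * Real.sqrt Real.pi *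
        (4 * (j : ℝ) + 1) := by
  simp only [det_Xmat, ← gaussianIntegral_apply, gaussianIntegral_physHermiteDetPoly]
  push_cast
  ring
end
end
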